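/- arXiv:math/0507381 — 4 statements merged into one kernel-verified Lean document; each statement's English description precedes it below -/
import Mathlib

section
/- Let Z = {I, −I} be the center of GL₂(𝔽₃). For every g ∈ GL₂(𝔽₃) with g ∉ Z but g² ∈ Z, one has det g = −1 if and only if g² = I (equivalently, det g = 1 if and only if g² = −I). In other words, in the double cover GL₂(𝔽₃) → PGL₂(𝔽₃) ≅ S₄, the elements lying over transpositions have order 2, while the elements lying over products of two disjoint transpositions have order 4. -/
set_option maxRecDepth 100000
set_option maxHeartbeats 4000000

/-- In `GL₂(𝔽₃)`, the center is `Z = {I, -I}`, and for every `g ∉ Z` with `g² ∈ Z`,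
one has `det g = -1 ↔ g² = I`, and equivalently `det g = 1 ↔ g² = -I`. -/
theorem gl2_zmod3_double_cover_property :
    (Subgroup.center (Matrix.GeneralLinearGroup (Fin 2) (ZMod 3)) :
      Set (Matrix.GeneralLinearGroup (Fin 2) (ZMod 3))) = {1, -1} ∧
    ∀ g : Matrix.GeneralLinearGroup (Fin 2) (ZMod 3),
      g ∉ Subgroup.center (Matrix.GeneralLinearGroup (Fin 2) (ZMod 3)) →
      g ^ 2 ∈ Subgroup.center (Matrix.GeneralLinearGroup (Fin 2) (ZMod 3)) →
      (Matrix.GeneralLinearGroup.det g = -1 ↔ g ^ 2 = 1) ∧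
      (Matrix.GeneralLinearGroup.det g = 1 ↔ g ^ 2 = -1) := by
  constructor
  · ext g
    simp only [SetLike.mem_coe, Subgroup.mem_center_iff, Set.mem_insert_iff,
      Set.mem_singleton_iff]
    revert g
    decide
  · intro g hg h2
    rw [Subgroup.mem_center_iff] at hg
    rw [Subgroup.mem_center_iff] at h2
    revert hg h2
    revert g
    decide
end

section
/- Let G := (V × V) ⋊ Aut(V) be the semidirect product of V × V by the automorphism group of the Klein four-group V, acting diagonally: a·(u, v) = (a(u), a(v)). Then G has exactly three normal subgroups of order 4, namely V × {1}, {1} × V, and the diagonal {(v, v) : v ∈ V} (each viewed inside the normal subgroup V × V of G). -/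
/-- The Klein four-group `V = (ℤ/2ℤ)²`. -/
abbrev KleinV : Type := Multiplicative (ZMod 2 × ZMod 2)

/-- The diagonal action of `Aut(V)` on `V × V`, `a • (u, v) = (a u, a v)`. -/
def diagAut : MulAut KleinV →* MulAut (KleinV × KleinV) where
  toFun a := MulEquiv.prodCongr a a
  map_one' := MulEquiv.ext fun _ => rfl
  map_mul' _ _ := MulEquiv.ext fun _ => rfl

/-- The subgroup `V × {1}` of `G = (V × V) ⋊ Aut(V)`. -/
def leftFactor : Subgroup ((KleinV × KleinV) ⋊[diagAut] MulAut KleinV) :=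
  ((⊤ : Subgroup KleinV).prod ⊥).map SemidirectProduct.inl

/-- The subgroup `{1} × V` of `G = (V × V) ⋊ Aut(V)`. -/
def rightFactor : Subgroup ((KleinV × KleinV) ⋊[diagAut] MulAut KleinV) :=
  ((⊥ : Subgroup KleinV).prod ⊤).map SemidirectProduct.inl

/-- The diagonal subgroup `{(v, v) : v ∈ V}` of `G = (V × V) ⋊ Aut(V)`. -/
def diagSubgroup : Subgroup ((KleinV × KleinV) ⋊[diagAut] MulAut KleinV) :=
  (((MonoidHom.id KleinV).prod (MonoidHom.id KleinV)).range).map SemidirectProduct.inl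

/- ### Auxiliary material -/

abbrev GrAux := (KleinV × KleinV) ⋊[diagAut] MulAut KleinV

lemma mem_map_inl_aux (S : Subgroup (KleinV × KleinV)) (x : GrAux) :
    x ∈ S.map SemidirectProduct.inl ↔ x.right = 1 ∧ x.left ∈ S := by
  constructor
  · rintro ⟨n, hn, rfl⟩; exact ⟨rfl, hn⟩
  · rintro ⟨h1, h2⟩
    exact ⟨x.left, h2, by ext <;> simp [h1]⟩

lemma normal_map_inl_aux (S : Subgroup (KleinV × KleinV))
    (hS : ∀ (a : MulAut KleinV), ∀ p ∈ S, diagAut a p ∈ S) :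
    (S.map (SemidirectProduct.inl : _ →* GrAux)).Normal := by
  constructor
  intro x hx g
  rw [mem_map_inl_aux] at hx ⊢
  obtain ⟨h1, h2⟩ := hx
  refine ⟨by simp [SemidirectProduct.mul_right, SemidirectProduct.inv_right, h1], ?_⟩
  have : (g * x * g⁻¹).left = diagAut g.right x.left := by
    simp [SemidirectProduct.mul_left, SemidirectProduct.mul_right,
      SemidirectProduct.inv_left, SemidirectProduct.inv_right, h1]
  rw [this]
  exact hS _ _ h2

lemma card_map_inl_aux (S : Subgroup (KleinV × KleinV)) :
    Nat.card (S.map (SemidirectProduct.inl : _ →* GrAux)) = Nat.card S :=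
  (Nat.card_congr (S.equivMapOfInjective _ SemidirectProduct.inl_injective).toEquiv).symm

lemma card_eq_finset_aux {G : Type*} [Group G] (S : Subgroup G) (s : Finset G)
    (h : ∀ p, p ∈ S ↔ p ∈ s) : Nat.card S = s.card := by
  rw [Nat.card_congr (Equiv.subtypeEquivRight h), Nat.card_eq_fintype_card, Fintype.card_coe]

/-- An auxiliary automorphism of the Klein group of order 3. -/
def tAAux : (ZMod 2 × ZMod 2) ≃+ (ZMod 2 × ZMod 2) where
  toFun p := (p.2, p.1 + p.2)
  invFun p := (p.1 + p.2, p.1)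
  left_inv := by decide
  right_inv := by decide
  map_add' := by decide

def sMAux : MulAut KleinV := AddEquiv.toMultiplicative (AddEquiv.prodComm)
def tMAux : MulAut KleinV := AddEquiv.toMultiplicative tAAux

set_option synthInstance.maxSize 2000 in
set_option synthInstance.maxHeartbeats 1000000 in
set_option maxRecDepth 40000 in
set_option maxHeartbeats 2000000 in
lemma autLemma_aux : ∀ a : MulAut KleinV, a ≠ 1 →
    ∃ c : MulAut KleinV, (a * (c * a * c⁻¹)) ^ 4 ≠ 1 := by decide

set_option synthInstance.maxSize 2000 in
set_option synthInstance.maxHeartbeats 1000000 in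
set_option maxRecDepth 40000 in
set_option maxHeartbeats 4000000 in
lemma classify_aux : ∀ a b : KleinV × KleinV, a ≠ 1 → b ≠ 1 → b ≠ a →
    diagAut sMAux a ∈ ({1, a, b, a * b} : Finset (KleinV × KleinV)) →
    diagAut sMAux b ∈ ({1, a, b, a * b} : Finset (KleinV × KleinV)) →
    diagAut tMAux a ∈ ({1, a, b, a * b} : Finset (KleinV × KleinV)) →
    diagAut tMAux b ∈ ({1, a, b, a * b} : Finset (KleinV × KleinV)) →
    (∀ p : KleinV × KleinV, p ∈ ({1, a, b, a * b} : Finset (KleinV × KleinV)) ↔ p.2 = 1) ∨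
    (∀ p : KleinV × KleinV, p ∈ ({1, a, b, a * b} : Finset (KleinV × KleinV)) ↔ p.1 = 1) ∨
    (∀ p : KleinV × KleinV, p ∈ ({1, a, b, a * b} : Finset (KleinV × KleinV)) ↔ p.1 = p.2) := by
  decide

lemma sq_eq_one_aux : ∀ x : KleinV × KleinV, x * x = 1 := by decide

lemma inv_eq_self_aux : ∀ x : KleinV × KleinV, x⁻¹ = x := by decide

lemma mem_prod_top_bot (p : KleinV × KleinV) :
    p ∈ (⊤ : Subgroup KleinV).prod (⊥ : Subgroup KleinV) ↔ p.2 = 1 := by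
  simp [Subgroup.mem_prod, Subgroup.mem_bot]

lemma mem_prod_bot_top (p : KleinV × KleinV) :
    p ∈ (⊥ : Subgroup KleinV).prod (⊤ : Subgroup KleinV) ↔ p.1 = 1 := by
  simp [Subgroup.mem_prod, Subgroup.mem_bot]

lemma mem_diag_range (p : KleinV × KleinV) :
    p ∈ ((MonoidHom.id KleinV).prod (MonoidHom.id KleinV)).range ↔ p.1 = p.2 := by
  constructor
  · rintro ⟨x, rfl⟩; rfl
  · intro h; exact ⟨p.1, Prod.ext rfl h⟩

lemma leftFactor_facts : leftFactor.Normal ∧ Nat.card leftFactor = 4 := by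
  constructor
  · exact normal_map_inl_aux _ (fun a p hp => by
      rw [mem_prod_top_bot] at hp ⊢
      show a p.2 = 1
      rw [hp, map_one])
  · rw [leftFactor, card_map_inl_aux, card_eq_finset_aux _
      (Finset.univ.filter (fun p => p.2 = 1)) (fun p => by simp [mem_prod_top_bot])]
    decide

lemma rightFactor_facts : rightFactor.Normal ∧ Nat.card rightFactor = 4 := by
  constructor
  · exact normal_map_inl_aux _ (fun a p hp => by
      rw [mem_prod_bot_top] at hp ⊢
      show a p.1 = 1
      rw [hp, map_one])
  · rw [rightFactor, card_map_inl_aux, card_eq_finset_aux _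
      (Finset.univ.filter (fun p => p.1 = 1)) (fun p => by simp [mem_prod_bot_top])]
    decide

lemma diagSubgroup_facts : diagSubgroup.Normal ∧ Nat.card diagSubgroup = 4 := by
  constructor
  · exact normal_map_inl_aux _ (fun a p hp => by
      rw [mem_diag_range] at hp ⊢
      show a p.1 = a p.2
      rw [hp])
  · rw [diagSubgroup, card_map_inl_aux, card_eq_finset_aux _
      (Finset.univ.filter (fun p => p.1 = p.2)) (fun p => by rw [mem_diag_range p]; simp)]
    decide

set_option maxHeartbeats 2000000 in
/-- The group `G = (V × V) ⋊ Aut(V)` (with `Aut(V)` acting diagonally) has exactly three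
normal subgroups of order `4`: `V × {1}`, `{1} × V` and the diagonal copy of `V`. -/
theorem semidirect_three_normal_subgroups_of_order_four :
    (leftFactor ≠ rightFactor ∧ leftFactor ≠ diagSubgroup ∧ rightFactor ≠ diagSubgroup) ∧
    ∀ H : Subgroup ((KleinV × KleinV) ⋊[diagAut] MulAut KleinV),
      (H.Normal ∧ Nat.card H = 4) ↔ (H = leftFactor ∨ H = rightFactor ∨ H = diagSubgroup) := by
  have hv0 : (Multiplicative.ofAdd ((1 : ZMod 2), (0 : ZMod 2)) : KleinV) ≠ 1 := by decide
  set v0 : KleinV := Multiplicative.ofAdd ((1 : ZMod 2), (0 : ZMod 2)) with hv0def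
  constructor
  · refine ⟨fun h => ?_, fun h => ?_, fun h => ?_⟩
    · have h1 : SemidirectProduct.inl (φ := diagAut) (v0, 1) ∈ leftFactor :=
        (mem_map_inl_aux _ _).mpr ⟨rfl, (mem_prod_top_bot _).mpr rfl⟩
      rw [h, rightFactor, mem_map_inl_aux] at h1
      exact hv0 ((mem_prod_bot_top _).mp h1.2)
    · have h1 : SemidirectProduct.inl (φ := diagAut) (v0, 1) ∈ leftFactor :=
        (mem_map_inl_aux _ _).mpr ⟨rfl, (mem_prod_top_bot _).mpr rfl⟩
      rw [h, diagSubgroup, mem_map_inl_aux] at h1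
      exact hv0 ((mem_diag_range _).mp h1.2)
    · have h1 : SemidirectProduct.inl (φ := diagAut) (1, v0) ∈ rightFactor :=
        (mem_map_inl_aux _ _).mpr ⟨rfl, (mem_prod_bot_top _).mpr rfl⟩
      rw [h, diagSubgroup, mem_map_inl_aux] at h1
      exact hv0 (((mem_diag_range _).mp h1.2).symm)
  intro H
  constructor
  swap
  · rintro (rfl | rfl | rfl)
    exacts [leftFactor_facts, rightFactor_facts, diagSubgroup_facts]
  rintro ⟨hN, hcard⟩
  -- Step 1: H is contained in the image of `inl`.
  have hker : H ≤ (SemidirectProduct.inl : _ →* GrAux).range := by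
    rw [SemidirectProduct.range_inl_eq_ker_rightHom]
    set K := H.map (SemidirectProduct.rightHom : GrAux →* MulAut KleinV) with hK
    have hKbot : K = ⊥ := by
      by_contra hKne
      obtain ⟨⟨k, hkK⟩, hk1⟩ := Subgroup.ne_bot_iff_exists_ne_one.mp hKne
      have hk1' : k ≠ 1 := fun h => hk1 (Subtype.ext h)
      obtain ⟨c, hc⟩ := autLemma_aux k hk1'
      have hKnorm : K.Normal := hN.map _ SemidirectProduct.rightHom_surjective
      have hmK : k * (c * k * c⁻¹) ∈ K := mul_mem hkK (hKnorm.conj_mem k hkK c)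
      have hdvd : Nat.card K ∣ 4 := by
        rw [← hcard]
        exact Subgroup.card_dvd_of_surjective _
          (MonoidHom.subgroupMap_surjective SemidirectProduct.rightHom H)
      obtain ⟨t, ht⟩ := hdvd
      have : ((⟨k * (c * k * c⁻¹), hmK⟩ : K) : MulAut KleinV) ^ 4 = 1 := by
        have h1 : (⟨k * (c * k * c⁻¹), hmK⟩ : K) ^ 4 = 1 := by
          have := pow_card_eq_one' (G := K) (x := ⟨k * (c * k * c⁻¹), hmK⟩)
          calc (⟨k * (c * k * c⁻¹), hmK⟩ : K) ^ 4
              = ((⟨k * (c * k * c⁻¹), hmK⟩ : K) ^ Nat.card K) ^ t := by rw [← pow_mul, ← ht]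
            _ = 1 := by rw [this, one_pow]
        calc ((⟨k * (c * k * c⁻¹), hmK⟩ : K) : MulAut KleinV) ^ 4
            = (((⟨k * (c * k * c⁻¹), hmK⟩ : K) ^ 4 : K) : MulAut KleinV) := by push_cast; ring
          _ = 1 := by rw [h1]; rfl
      exact hc this
    intro x hx
    have : SemidirectProduct.rightHom x ∈ K := Subgroup.mem_map_of_mem _ hx
    rw [hKbot, Subgroup.mem_bot] at this
    exact this
  have hmapcomap : (H.comap (SemidirectProduct.inl : _ →* GrAux)).map SemidirectProduct.inl = H :=
    Subgroup.map_comap_eq_self hker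
  set H' : Subgroup (KleinV × KleinV) := H.comap SemidirectProduct.inl with hH'
  have hcard' : Nat.card H' = 4 := by
    rw [← hcard, ← hmapcomap, card_map_inl_aux]
  -- invariance of H' under all automorphisms
  have hinv : ∀ (a : MulAut KleinV), ∀ p ∈ H', diagAut a p ∈ H' := by
    intro a p hp
    have : (SemidirectProduct.inl (diagAut a p) : GrAux) ∈ H := by
      rw [SemidirectProduct.inl_aut, map_inv]
      exact hN.conj_mem _ hp _
    exact this
  -- find two independent elements a b of H'
  have hH'ne : H' ≠ ⊥ := by
    intro h
    rw [h, Subgroup.card_bot] at hcard'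
    omega
  obtain ⟨⟨a, haH⟩, ha1'⟩ := Subgroup.ne_bot_iff_exists_ne_one.mp hH'ne
  have ha1 : a ≠ 1 := fun h => ha1' (Subtype.ext h)
  have hlt : Subgroup.zpowers a < H' := by
    refine lt_of_le_of_ne ((Subgroup.zpowers_le).mpr haH) (fun h => ?_)
    have h2 : Nat.card (Subgroup.zpowers a) = orderOf a := Nat.card_zpowers a
    have h3 : orderOf a ∣ 2 := orderOf_dvd_of_pow_eq_one (by rw [pow_two]; exact sq_eq_one_aux a)
    rw [h, hcard'] at h2
    have := Nat.le_of_dvd (by norm_num) h3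
    omega
  obtain ⟨b, hbH, hbz⟩ := SetLike.exists_of_lt hlt
  have hb1 : b ≠ 1 := fun h => hbz (h ▸ one_mem _)
  have hba : b ≠ a := fun h => hbz (h ▸ Subgroup.mem_zpowers a)
  -- the subgroup H' is exactly {1, a, b, a*b}
  set s : Finset (KleinV × KleinV) := {1, a, b, a * b} with hs
  have hab1 : a * b ≠ 1 := fun h => hba (by
    have := congrArg (a * ·) h
    simp only [← mul_assoc, sq_eq_one_aux a, one_mul, mul_one] at this
    exact this)
  have haba : a * b ≠ a := fun h => hb1 (by
    have := congrArg (a * ·) h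
    simpa [← mul_assoc, sq_eq_one_aux a] using this)
  have habb : a * b ≠ b := fun h => ha1 (by
    have := congrArg (· * b) h
    simpa [mul_assoc, sq_eq_one_aux b] using this)
  have hscard : s.card = 4 := by
    rw [hs]
    rw [Finset.card_insert_of_notMem (by simp [Ne.symm ha1, Ne.symm hb1, Ne.symm hab1]),
      Finset.card_insert_of_notMem (by simp [Ne.symm hba, Ne.symm haba]),
      Finset.card_insert_of_notMem (by simp [Ne.symm habb]), Finset.card_singleton]
  have hsub : (↑s : Set (KleinV × KleinV)) ⊆ (H' : Set (KleinV × KleinV)) := by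
    intro p hp
    simp only [hs, Finset.coe_insert, Set.mem_insert_iff, Finset.coe_singleton,
      Set.mem_singleton_iff] at hp
    rcases hp with rfl | rfl | rfl | rfl
    exacts [one_mem _, haH, hbH, mul_mem haH hbH]
  have hset : (↑s : Set (KleinV × KleinV)) = (H' : Set (KleinV × KleinV)) := by
    refine Set.eq_of_subset_of_ncard_le hsub ?_ (Set.toFinite _)
    rw [Set.ncard_coe_finset, hscard, ← Nat.card_coe_set_eq]
    simp only [SetLike.coe_sort_coe]
    rw [hcard']
  have hmem : ∀ p, p ∈ H' ↔ p ∈ s := fun p => by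
    rw [← SetLike.mem_coe, ← hset]; simp
  -- classify
  have hclass := classify_aux a b ha1 hb1 hba
    ((hmem _).mp (hinv sMAux a haH)) ((hmem _).mp (hinv sMAux b hbH))
    ((hmem _).mp (hinv tMAux a haH)) ((hmem _).mp (hinv tMAux b hbH))
  rcases hclass with hc | hc | hc
  · left
    rw [← hmapcomap, leftFactor]
    congr 1
    ext p
    rw [hmem p, hc p, mem_prod_top_bot]
  · right; left
    rw [← hmapcomap, rightFactor]
    congr 1
    ext p
    rw [hmem p, hc p, mem_prod_bot_top]
  · right; right
    rw [← hmapcomap, diagSubgroup]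
    congr 1
    ext p
    rw [hmem p, hc p, mem_diag_range]
end

section
/- Let W := (ℤ/2ℤ)⁴. Given any three subgroups H₁, H₂, H₃ of W, each of cardinality 4, such that Hᵢ ∩ Hⱼ is trivial for all i ≠ j, there exist two further subgroups H₄, H₅ of W of cardinality 4 such that the five subgroups H₁, H₂, H₃, H₄, H₅ have pairwise trivial intersections. -/
/-!
Write `W = H₁ ⊕ H₂`. A subgroup of order 4 meeting both `H₁` and `H₂` trivially is the graph
`{a + ψ a}` of an isomorphism `ψ : H₁ → H₂`, so `H₃` is the graph of some `ψ`, and two such graphs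
meet trivially when the isomorphisms disagree away from `0`. Identifying `H₂` with `𝔽₄`,
multiplication by a primitive cube root of unity `ω` has no nonzero fixed point, nor has `ω²`;
the graphs of `ω ψ` and `ω² ψ` are the two missing subgroups.
-/

section InternalGraph

variable {G : Type*} [AddCommGroup G] {A B C : AddSubgroup G}

theorem AddSubgroup.eq_and_eq_of_add_eq_add (hAB : A ⊓ B = ⊥) {a a' b b' : G} (ha : a ∈ A)
    (ha' : a' ∈ A) (hb : b ∈ B) (hb' : b' ∈ B) (h : a + b = a' + b') : a = a' ∧ b = b' := by
  have hmem : a - a' ∈ A ⊓ B := by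
    refine ⟨A.sub_mem ha ha', ?_⟩
    rw [show a - a' = b' - b by rw [sub_eq_sub_iff_add_eq_add, add_comm b', h]]
    exact B.sub_mem hb' hb
  rw [hAB, AddSubgroup.mem_bot, sub_eq_zero] at hmem
  subst hmem
  exact ⟨rfl, add_left_cancel h⟩

/-- The graph `{a + ψ a | a ∈ A}`, inside `G` rather than `A × B`. -/
def internalGraph (ψ : A →+ B) : AddSubgroup G :=
  (A.subtype + B.subtype.comp ψ).range

theorem card_internalGraph (hAB : A ⊓ B = ⊥) (ψ : A →+ B) :
    Nat.card (internalGraph ψ) = Nat.card A := by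
  have hinj : Function.Injective (A.subtype + B.subtype.comp ψ) := fun a a' h =>
    Subtype.ext (AddSubgroup.eq_and_eq_of_add_eq_add hAB a.2 a'.2 (ψ a).2 (ψ a').2 h).1
  exact Nat.card_congr (AddMonoidHom.ofInjective hinj).toEquiv.symm

theorem inf_internalGraph_left (hAB : A ⊓ B = ⊥) {ψ : A →+ B} (hψ : Function.Injective ψ) :
    A ⊓ internalGraph ψ = ⊥ := by
  refine (AddSubgroup.eq_bot_iff_forall _).2 ?_
  rintro _ ⟨hx, a, rfl⟩
  have hψa := (AddSubgroup.eq_and_eq_of_add_eq_add hAB a.2 hx (ψ a).2 B.zero_mem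
    (add_zero _).symm).2
  simp [(injective_iff_map_eq_zero ψ).1 hψ a (Subtype.ext hψa)]

theorem inf_internalGraph_right (hAB : A ⊓ B = ⊥) (ψ : A →+ B) : B ⊓ internalGraph ψ = ⊥ := by
  refine (AddSubgroup.eq_bot_iff_forall _).2 ?_
  rintro _ ⟨hx, a, rfl⟩
  have ha := (AddSubgroup.eq_and_eq_of_add_eq_add hAB a.2 A.zero_mem (ψ a).2 hx
    (zero_add _).symm).1
  simp [ZeroMemClass.coe_eq_zero.1 ha]

theorem internalGraph_inf_internalGraph (hAB : A ⊓ B = ⊥) {ψ ψ' : A →+ B}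
    (h : ∀ a, ψ a = ψ' a → a = 0) : internalGraph ψ ⊓ internalGraph ψ' = ⊥ := by
  refine (AddSubgroup.eq_bot_iff_forall _).2 ?_
  rintro _ ⟨⟨a, rfl⟩, a', ha'⟩
  obtain ⟨haa', hψ⟩ := AddSubgroup.eq_and_eq_of_add_eq_add hAB a'.2 a.2 (ψ' a').2 (ψ a).2 ha'
  obtain rfl : a' = a := Subtype.ext haa'
  simp [h a' (Subtype.ext hψ.symm)]

theorem exists_internalGraph_eq [Finite G] (hAB : A ⊓ B = ⊥) (hAC : A ⊓ C = ⊥)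
    (hBC : B ⊓ C = ⊥) (hC : Nat.card C = Nat.card A) (hG : Nat.card A * Nat.card B = Nat.card G) :
    ∃ ψ : A →+ B, Function.Injective ψ ∧ internalGraph ψ = C := by
  have hinj : Function.Injective (C.subtype.coprod B.subtype) := by
    refine (injective_iff_map_eq_zero _).2 fun p hp => ?_
    obtain ⟨h1, h2⟩ := AddSubgroup.eq_and_eq_of_add_eq_add (inf_comm B C ▸ hBC) p.1.2 C.zero_mem
      p.2.2 B.zero_mem (hp.trans (add_zero 0).symm)
    exact Prod.ext (Subtype.ext h1) (Subtype.ext h2)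
  let e : C × B ≃+ G := AddEquiv.ofBijective _
    ((Nat.bijective_iff_injective_and_card _).2 ⟨hinj, by rw [Nat.card_prod, hC, hG]⟩)
  -- writing `a = c + b` with `c ∈ C`, `b ∈ B`, the graph point over `a` is `a - b = c`
  let ψ : A →+ B := -((AddMonoidHom.snd C B).comp (e.symm.toAddMonoidHom.comp A.subtype))
  have hψ : ∀ a : A, (a : G) + ψ a = (e.symm a).1 := fun a => by
    have h : ((e.symm a).1 : G) + (e.symm a).2 = a := e.apply_symm_apply a
    exact (sub_eq_add_neg _ _).symm.trans (sub_eq_iff_eq_add.2 h.symm)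
  refine ⟨ψ, (injective_iff_map_eq_zero ψ).2 fun a ha => ?_,
    AddSubgroup.eq_of_le_of_card_ge ?_ (by rw [card_internalGraph hAB, hC])⟩
  · have haC : ((e.symm a).1 : G) ∈ C := (e.symm a).1.2
    rw [← hψ a, ha, ZeroMemClass.coe_zero, add_zero] at haC
    have hmem : (a : G) ∈ A ⊓ C := ⟨a.2, haC⟩
    rw [hAC, AddSubgroup.mem_bot] at hmem
    exact Subtype.ext hmem
  · rintro _ ⟨a, rfl⟩
    show (a : G) + ψ a ∈ C
    exact hψ a ▸ (e.symm a).1.2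

theorem exists_two_more_of_fixedPointFree [Finite G] (hAB : A ⊓ B = ⊥) (hAC : A ⊓ C = ⊥)
    (hBC : B ⊓ C = ⊥) (hC : Nat.card C = Nat.card A) (hG : Nat.card A * Nat.card B = Nat.card G)
    (c : B ≃+ B) (hc : ∀ x, c x = x → x = 0) (hc2 : ∀ x, c (c x) = x → x = 0) :
    ∃ D E : AddSubgroup G, Nat.card D = Nat.card A ∧ Nat.card E = Nat.card A ∧
      A ⊓ D = ⊥ ∧ B ⊓ D = ⊥ ∧ C ⊓ D = ⊥ ∧ A ⊓ E = ⊥ ∧ B ⊓ E = ⊥ ∧ C ⊓ E = ⊥ ∧ D ⊓ E = ⊥ := by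
  obtain ⟨ψ, hψ, rfl⟩ := exists_internalGraph_eq hAB hAC hBC hC hG
  have hψ0 := (injective_iff_map_eq_zero ψ).1 hψ
  let ψ₁ : A →+ B := c.toAddMonoidHom.comp ψ
  let ψ₂ : A →+ B := c.toAddMonoidHom.comp ψ₁
  have hψ₁ : Function.Injective ψ₁ := c.injective.comp hψ
  have hψ₂ : Function.Injective ψ₂ := c.injective.comp hψ₁
  exact ⟨internalGraph ψ₁, internalGraph ψ₂, card_internalGraph hAB _, card_internalGraph hAB _,
    inf_internalGraph_left hAB hψ₁, inf_internalGraph_right hAB _,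
    internalGraph_inf_internalGraph hAB fun a h => hψ0 a (hc _ h.symm),
    inf_internalGraph_left hAB hψ₂, inf_internalGraph_right hAB _,
    internalGraph_inf_internalGraph hAB fun a h => hψ0 a (hc2 _ h.symm),
    internalGraph_inf_internalGraph hAB fun a h => hψ0 a (hc _ (c.injective h).symm)⟩

end InternalGraph

/-- Multiplication by `ω` on `𝔽₄ = 𝔽₂[ω]`, `ω² = ω + 1`, in the basis `(1, ω)`. -/
def mulOmega : (Fin 2 → ZMod 2) ≃+ (Fin 2 → ZMod 2) where
  toFun f := ![f 1, f 0 + f 1]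
  invFun f := ![f 0 + f 1, f 0]
  left_inv := by decide
  right_inv := by decide
  map_add' := by decide

theorem mulOmega_fixedPointFree : ∀ f, mulOmega f = f → f = 0 := by decide

theorem mulOmega_mulOmega_fixedPointFree : ∀ f, mulOmega (mulOmega f) = f → f = 0 := by decide

theorem exists_addAut_fixedPointFree_of_card_eq_four {V : Type*} [AddCommGroup V]
    [Module (ZMod 2) V] (hV : Nat.card V = 4) :
    ∃ c : V ≃+ V, (∀ x, c x = x → x = 0) ∧ ∀ x, c (c x) = x → x = 0 := by
  have : Finite V := Nat.finite_of_card_ne_zero (by omega)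
  have hrank : Module.finrank (ZMod 2) V = 2 := by
    have := Module.natCard_eq_pow_finrank (K := ZMod 2) (V := V)
    rw [hV, Nat.card_zmod] at this
    exact (Nat.pow_right_injective le_rfl this).symm
  let e : V ≃+ (Fin 2 → ZMod 2) := (Module.finBasisOfFinrankEq _ _ hrank).equivFun.toAddEquiv
  refine ⟨e.trans (mulOmega.trans e.symm), fun x hx => ?_, fun x hx => ?_⟩
  · simpa using mulOmega_fixedPointFree (e x) (by simpa using congrArg e hx)
  · simpa using mulOmega_mulOmega_fixedPointFree (e x) (by simpa using congrArg e hx)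

/-- Given three subgroups of order `4` of `W = (ℤ/2ℤ)⁴` with pairwise trivial
intersections, there exist two further subgroups of order `4` such that all five
subgroups have pairwise trivial intersections. -/
theorem exists_two_more_order_four_subgroups
    (H₁ H₂ H₃ : AddSubgroup (ZMod 2 × ZMod 2 × ZMod 2 × ZMod 2))
    (h₁ : Nat.card H₁ = 4) (h₂ : Nat.card H₂ = 4) (h₃ : Nat.card H₃ = 4)
    (h₁₂ : H₁ ⊓ H₂ = ⊥) (h₁₃ : H₁ ⊓ H₃ = ⊥) (h₂₃ : H₂ ⊓ H₃ = ⊥) :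
    ∃ H₄ H₅ : AddSubgroup (ZMod 2 × ZMod 2 × ZMod 2 × ZMod 2),
      Nat.card H₄ = 4 ∧ Nat.card H₅ = 4 ∧
      H₁ ⊓ H₄ = ⊥ ∧ H₂ ⊓ H₄ = ⊥ ∧ H₃ ⊓ H₄ = ⊥ ∧
      H₁ ⊓ H₅ = ⊥ ∧ H₂ ⊓ H₅ = ⊥ ∧ H₃ ⊓ H₅ = ⊥ ∧ H₄ ⊓ H₅ = ⊥ := by
  obtain ⟨c, hc, hc2⟩ :=
    exists_addAut_fixedPointFree_of_card_eq_four (V := AddSubgroup.toZModSubmodule 2 H₂) h₂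
  have hW : Nat.card H₁ * Nat.card H₂ = Nat.card (ZMod 2 × ZMod 2 × ZMod 2 × ZMod 2) := by
    simp [h₁, h₂]
  rw [← h₁]
  exact exists_two_more_of_fixedPointFree h₁₂ h₁₃ h₂₃ (h₃.trans h₁.symm) hW c hc hc2
end

section
/- Under the hypotheses below, N₁ ∩ N₂ = L. -/
/-!
Put `M = N₁ ⊓ N₂`. It is Galois over `ℚ` and `L ≤ M ≤ N₁`, so `[M : ℚ]` is a divisor of `24`
divisible by `6`. It is not `24`, for then `N₁ = M ≤ N₂` and `N₁ = N₂` by degrees. It is not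
`12`: the fixing subgroup of `M` in `Gal(N₁/ℚ) ≅ S₄` would be a normal subgroup of order `2`,
hence central, but `S₄` has trivial center. So `[M : ℚ] = 6 = [L : ℚ]`, and `M = L`.
-/

open Equiv IntermediateField Module

theorem Equiv.Perm.center_eq_bot {α : Type*} (hα : 3 ≤ ENat.card α) :
    Subgroup.center (Perm α) = ⊥ := by
  classical
  refine eq_bot_iff.mpr fun g hg => Subgroup.mem_bot.mpr ?_
  by_contra hg1
  obtain ⟨a, ha⟩ : ∃ a, g a ≠ a := by
    by_contra! h
    exact hg1 (Perm.ext h)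
  obtain ⟨c, hca, hcga⟩ := ENat.exists_ne_ne_of_three_le hα a (g a)
  -- evaluating `swap a c * g = g * swap a c` at `a` gives `g a = g c`
  have hcomm := congrArg (· a) (Subgroup.mem_center_iff.mp hg (swap a c))
  simp only [Perm.coe_mul, Function.comp_apply, swap_apply_left,
    swap_apply_of_ne_of_ne ha hcga.symm] at hcomm
  exact hca (g.injective hcomm).symm

theorem MulEquiv.center_eq_bot {G H : Type*} [Group G] [Group H] (e : G ≃* H)
    (hH : Subgroup.center H = ⊥) : Subgroup.center G = ⊥ := by
  refine eq_bot_iff.mpr fun g hg => Subgroup.mem_bot.mpr (e.injective ?_)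
  have : e g ∈ Subgroup.center H := (MulEquivClass.apply_mem_center_iff e).mpr hg
  rwa [hH, Subgroup.mem_bot, ← map_one e] at this

theorem Subgroup.Normal.le_center_of_card_eq_two {G : Type*} [Group G] {H : Subgroup G}
    (hH : H.Normal) (h2 : Nat.card H = 2) : H ≤ Subgroup.center G := by
  obtain ⟨y, -, hy⟩ := (Nat.card_eq_two_iff' (1 : H)).mp h2
  intro x hx
  refine Subgroup.mem_center_iff.mpr fun g => ?_
  by_cases hx1 : x = 1
  · simp [hx1]
  have hconj : g * x * g⁻¹ = x := by
    have h1 := hy ⟨g * x * g⁻¹, hH.conj_mem x hx g⟩ (by simpa [Subtype.ext_iff] using hx1)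
    have h2 := hy ⟨x, hx⟩ (by simpa [Subtype.ext_iff] using hx1)
    exact congrArg Subtype.val (h1.trans h2.symm)
  calc g * x = g * x * g⁻¹ * g := by group
    _ = x * g := by rw [hconj]

theorem IsGalois.finrank_ne_two_of_center_eq_bot {F E : Type*} [Field F] [Field E] [Algebra F E]
    [FiniteDimensional F E] [IsGalois F E] (hZ : Subgroup.center Gal(E/F) = ⊥)
    (K : IntermediateField F E) [IsGalois F K] : finrank K E ≠ 2 := by
  intro h2
  rw [← IsGalois.card_fixingSubgroup_eq_finrank] at h2
  have hle := (IsGalois.fixingSubgroup_normal_of_isGalois K).le_center_of_card_eq_two h2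
  rw [hZ, le_bot_iff] at hle
  rw [hle, Subgroup.card_bot] at h2
  omega

theorem IntermediateField.finrank_ne_two_mul_of_center_eq_bot {F Ω : Type*} [Field F] [Field Ω]
    [Algebra F Ω] {K N : IntermediateField F Ω} (hKN : K ≤ N) [FiniteDimensional F N]
    [IsGalois F N] [IsGalois F K] (hZ : Subgroup.center Gal(N/F) = ⊥) :
    finrank F N ≠ 2 * finrank F K := by
  let e := restrictAlgEquiv hKN
  have := IsGalois.of_algEquiv e
  intro h
  refine IsGalois.finrank_ne_two_of_center_eq_bot hZ (restrict hKN)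
    (Nat.eq_of_mul_eq_mul_left (finrank_pos (R := F) (M := restrict hKN)) ?_)
  rw [finrank_mul_finrank, h, ← e.toLinearEquiv.finrank_eq, mul_comm]

theorem IsGalois.finrank_eq_factorial_of_mulEquiv_perm {F E α : Type*} [Field F] [Field E]
    [Algebra F E] [IsGalois F E] [Finite α] (e : Gal(E/F) ≃* Perm α) :
    finrank F E = (Nat.card α).factorial := by
  have : Finite Gal(E/F) := .of_equiv _ e.symm.toEquiv
  have := IsGalois.finiteDimensional_of_finite F E
  rw [← IsGalois.card_aut_eq_finrank, Nat.card_congr e.toEquiv, Nat.card_perm]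

theorem inf_of_two_s4_fields_eq_general
    (L N₁ N₂ : IntermediateField ℚ (AlgebraicClosure ℚ))
    (hN₁ : IsGalois ℚ N₁) (hN₂ : IsGalois ℚ N₂)
    (hG₁ : Nonempty ((N₁ ≃ₐ[ℚ] N₁) ≃* Equiv.Perm (Fin 4)))
    (hG₂ : Nonempty ((N₂ ≃ₐ[ℚ] N₂) ≃* Equiv.Perm (Fin 4)))
    (hLdeg : Module.finrank ℚ L = 6)
    (hLN₁ : L ≤ N₁) (hLN₂ : L ≤ N₂) (hne : N₁ ≠ N₂) :
    N₁ ⊓ N₂ = L := by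
  obtain ⟨e₁⟩ := hG₁
  obtain ⟨e₂⟩ := hG₂
  have hN₁deg : finrank ℚ N₁ = 24 := by
    rw [IsGalois.finrank_eq_factorial_of_mulEquiv_perm e₁, Nat.card_fin]; rfl
  have hN₂deg : finrank ℚ N₂ = 24 := by
    rw [IsGalois.finrank_eq_factorial_of_mulEquiv_perm e₂, Nat.card_fin]; rfl
  have := Module.finite_of_finrank_pos (by omega : 0 < finrank ℚ N₁)
  have := Module.finite_of_finrank_pos (by omega : 0 < finrank ℚ N₂)
  -- The `ℚ`-algebra structure on `Nᵢ` in the hypotheses is `DivisionRing.toRatAlgebra`, while the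
  -- intermediate-field API uses `IntermediateField.algebra'`; instance search cannot identify
  -- them, although they are definitionally equal.
  have : @IsGalois ℚ _ N₁ _ N₁.algebra' := hN₁
  have : @IsGalois ℚ _ N₂ _ N₂.algebra' := hN₂
  have hLM : L ≤ N₁ ⊓ N₂ := le_inf hLN₁ hLN₂
  have hM_ne_24 : finrank ℚ ↥(N₁ ⊓ N₂) ≠ 24 := fun h => hne <|
    have hMN₁ := eq_of_le_of_finrank_eq inf_le_left (h.trans hN₁deg.symm)
    eq_of_le_of_finrank_eq (hMN₁ ▸ inf_le_right) (hN₁deg.trans hN₂deg.symm)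
  have hM_ne_12 : finrank ℚ N₁ ≠ 2 * finrank ℚ ↥(N₁ ⊓ N₂) :=
    finrank_ne_two_mul_of_center_eq_bot inf_le_left
      (e₁.center_eq_bot (Perm.center_eq_bot (by simp; decide)))
  have hdvd24 : finrank ℚ ↥(N₁ ⊓ N₂) ∣ finrank ℚ N₁ := finrank_dvd_of_le_right inf_le_left
  have hdvd6 : finrank ℚ L ∣ finrank ℚ ↥(N₁ ⊓ N₂) := finrank_dvd_of_le_right hLM
  rw [hN₁deg] at hdvd24 hM_ne_12
  rw [hLdeg] at hdvd6
  have hMdeg : finrank ℚ ↥(N₁ ⊓ N₂) = 6 := by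
    have := Nat.le_of_dvd (by norm_num) hdvd24
    interval_cases finrank ℚ ↥(N₁ ⊓ N₂) <;> omega
  exact (eq_of_le_of_finrank_eq hLM (hLdeg.trans hMdeg.symm)).symm

/-- If `N₁ ≠ N₂` are Galois extensions of `ℚ` (inside a fixed algebraic closure) with
Galois group `S₄`, both containing a Galois extension `L/ℚ` of degree `6`, then
`N₁ ∩ N₂ = L`. -/
theorem inf_of_two_s4_fields_eq
    (L N₁ N₂ : IntermediateField ℚ (AlgebraicClosure ℚ))
    (hN₁ : IsGalois ℚ N₁) (hN₂ : IsGalois ℚ N₂)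
    (hG₁ : Nonempty ((N₁ ≃ₐ[ℚ] N₁) ≃* Equiv.Perm (Fin 4)))
    (hG₂ : Nonempty ((N₂ ≃ₐ[ℚ] N₂) ≃* Equiv.Perm (Fin 4)))
    (hL : IsGalois ℚ L) (hLdeg : Module.finrank ℚ L = 6)
    (hLN₁ : L ≤ N₁) (hLN₂ : L ≤ N₂) (hne : N₁ ≠ N₂) :
    N₁ ⊓ N₂ = L :=
  inf_of_two_s4_fields_eq_general L N₁ N₂ hN₁ hN₂ hG₁ hG₂ hLdeg hLN₁ hLN₂ hne
end
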